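/- arXiv:2511.06737 — 3 statements merged into one kernel-verified Lean document; each statement's English description precedes it below -/
import Mathlib

section
/- For every natural number n, a(n) = (2/π) · ∫_0^π (2cos θ)^n · (1 + cos θ)/2 dθ. -/
/-!
By the reflection principle, `a(n,m) = f(n,m) - f(n,m+2)` where `f(n,m)` counts the unconstrained
`±1` walks on `ℤ` from `0` to `m`, so the sum over `m` telescopes to `a(n) = f(n,0) + f(n,1)`,
which is `C(n, ⌊n/2⌋)`. On the other side, `∫₀^π (2 cos θ)ⁿ dθ` vanishes for odd `n` and equals
`π C(n, n/2)` for even `n` (Wallis), and `(2 cos θ)ⁿ (1 + cos θ) = (2 cos θ)ⁿ + (2 cos θ)ⁿ⁺¹ / 2`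
picks out exactly the one term of the right parity.
-/

open Filter Real

/-- `aa n m` = number of length-`n` paths on `ℤ≥0` with steps `±1` starting at `0`
and ending at `m`. -/
def aa : ℕ → ℕ → ℕ
  | 0, m => if m = 0 then 1 else 0
  | n+1, m => aa n (m+1) + (if m = 0 then 0 else aa n (m-1))

/-- `aSum n = Σ_{m=0}^n aa n m`. -/
def aSum (n : ℕ) : ℕ := ∑ m ∈ Finset.range (n+1), aa n m

/-- The modular variant `b(n,m)` depending on `ℓ`:
`b(n,m) = a(n,m)` if `m ≡ ℓ-1 (mod ℓ)`; otherwise `b(0,m) = δ_{m,0}`, and for `n ≥ 1`,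
`b(n,m) = b(n-1,m-1) + b(n-1,m+1)` if `m % ℓ < ℓ-2` (negative-index terms are `0`),
and `b(n,m) = b(n-1,m-1)` if `m ≡ ℓ-2 (mod ℓ)`. -/
def bb (ℓ : ℕ) : ℕ → ℕ → ℕ
  | 0, m => if m % ℓ = ℓ - 1 then aa 0 m else if m = 0 then 1 else 0
  | n+1, m =>
    if m % ℓ = ℓ - 1 then aa (n+1) m
    else if m % ℓ = ℓ - 2 then (if m = 0 then 0 else bb ℓ n (m-1))
    else (if m = 0 then 0 else bb ℓ n (m-1)) + bb ℓ n (m+1)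

/-- `bSum ℓ n = Σ_{m=0}^n bb ℓ n m`. -/
def bSum (ℓ : ℕ) (n : ℕ) : ℕ := ∑ m ∈ Finset.range (n+1), bb ℓ n m

/-- `cc ℓ n r = Σ_{m ≥ 0, m ≡ r (mod ℓ)} aa n m` (finite since `aa n m = 0` for `m > n`). -/
def cc (ℓ : ℕ) (n r : ℕ) : ℕ :=
  ∑ m ∈ Finset.range (n+1), if m % ℓ = r then aa n m else 0

/-- `ww ℓ n = Σ_{0 ≤ m ≤ n, m ≡ ℓ-1 (mod ℓ)} bb ℓ n m`. -/
def ww (ℓ : ℕ) (n : ℕ) : ℕ :=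
  ∑ m ∈ Finset.range (n+1), if m % ℓ = ℓ - 1 then bb ℓ n m else 0

theorem Nat.centralBinom_succ_eq_two_mul_choose (k : ℕ) :
    (k + 1).centralBinom = 2 * (2 * k + 1).choose k := by
  rw [Nat.centralBinom_eq_two_mul_choose, mul_add_one, Nat.choose_succ_succ,
    Nat.choose_symm_half, ← two_mul]

/-- The number of `±1` walks on `ℤ` of length `n` from `0` to `m`. -/
def freeWalks (n m : ℕ) : ℤ := if (n + m) % 2 = 0 then n.choose ((n + m) / 2) else 0

lemma freeWalks_eq_zero_of_lt {n m : ℕ} (h : n < m) : freeWalks n m = 0 := by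
  unfold freeWalks
  split_ifs with hpar
  · rw [Nat.choose_eq_zero_of_lt (by omega), Nat.cast_zero]
  · rfl

lemma freeWalks_zero (m : ℕ) : freeWalks 0 m = if m = 0 then 1 else 0 := by
  rcases m with _ | m
  · rfl
  · simp [freeWalks_eq_zero_of_lt (Nat.succ_pos m)]

lemma freeWalks_succ_succ (n m : ℕ) :
    freeWalks (n + 1) (m + 1) = freeWalks n m + freeWalks n (m + 2) := by
  unfold freeWalks
  by_cases hpar : (n + m) % 2 = 0
  · rw [if_pos (by omega), if_pos hpar, if_pos (by omega),
      show (n + 1 + (m + 1)) / 2 = (n + m) / 2 + 1 by omega,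
      show (n + (m + 2)) / 2 = (n + m) / 2 + 1 by omega, Nat.choose_succ_succ, Nat.cast_add]
  · rw [if_neg (by omega), if_neg hpar, if_neg (by omega), add_zero]

lemma freeWalks_succ_zero (n : ℕ) : freeWalks (n + 1) 0 = 2 * freeWalks n 1 := by
  unfold freeWalks
  obtain ⟨k, rfl | rfl⟩ := Nat.even_or_odd' n
  · rw [if_neg (by omega), if_neg (by omega), mul_zero]
  · rw [if_pos (by omega), if_pos (by omega), show (2 * k + 1 + 1 + 0) / 2 = k + 1 by omega,
      show 2 * k + 1 + 1 = 2 * (k + 1) by ring, ← Nat.centralBinom_eq_two_mul_choose,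
      Nat.centralBinom_succ_eq_two_mul_choose, Nat.choose_symm_half, Nat.cast_mul, Nat.cast_two]

lemma freeWalks_zero_add_freeWalks_one (n : ℕ) :
    freeWalks n 0 + freeWalks n 1 = n.choose (n / 2) := by
  unfold freeWalks
  obtain ⟨k, rfl | rfl⟩ := Nat.even_or_odd' n
  · rw [if_pos (by omega), if_neg (by omega), add_zero, add_zero]
  · rw [if_neg (by omega), if_pos (by omega), zero_add,
      show (2 * k + 1 + 1) / 2 = k + 1 by omega, show (2 * k + 1) / 2 = k by omega,
      Nat.choose_symm_half]

/-- Reflection principle: the walks from `0` to `m` that touch `-1` correspond, by reflecting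
their part before the first visit to `-1`, to the free walks from `-2` to `m`. -/
theorem aa_eq_freeWalks_sub (n m : ℕ) : (aa n m : ℤ) = freeWalks n m - freeWalks n (m + 2) := by
  induction n generalizing m with
  | zero =>
    rw [freeWalks_zero, freeWalks_zero]
    rcases m with _ | m <;> simp [aa]
  | succ n ih =>
    rcases m with _ | m
    · simp only [aa, ↓reduceIte, add_zero]
      rw [ih, freeWalks_succ_zero, show (0 : ℕ) + 2 = 1 + 1 from rfl, freeWalks_succ_succ]
      ring
    · simp only [aa, if_neg (Nat.succ_ne_zero m), Nat.add_sub_cancel, Nat.cast_add]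
      rw [ih, ih, freeWalks_succ_succ, freeWalks_succ_succ]
      ring

theorem aSum_eq_choose (n : ℕ) : aSum n = n.choose (n / 2) := by
  have htelescope := Finset.sum_range_sub' (fun m ↦ freeWalks n m + freeWalks n (m + 1)) (n + 1)
  rw [freeWalks_eq_zero_of_lt (show n < n + 1 by omega),
    freeWalks_eq_zero_of_lt (show n < n + 1 + 1 by omega), add_zero,
    sub_zero, freeWalks_zero_add_freeWalks_one] at htelescope
  zify
  rw [aSum, Nat.cast_sum, ← htelescope]
  exact Finset.sum_congr rfl fun m _ ↦ by rw [aa_eq_freeWalks_sub]; ring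

theorem integral_cos_pow_odd (k : ℕ) : ∫ x in (0 : ℝ)..π, cos x ^ (2 * k + 1) = 0 := by
  simpa using integral_sin_pow_mul_cos_pow_odd (a := 0) (b := π) 0 k

theorem integral_cos_pow_even (k : ℕ) :
    ∫ x in (0 : ℝ)..π, cos x ^ (2 * k) = π * k.centralBinom / 4 ^ k := by
  induction k with
  | zero => simp
  | succ k ih =>
    have hrec : ((k : ℝ) + 1) * (k + 1).centralBinom = 2 * (2 * k + 1) * k.centralBinom := by
      exact_mod_cast Nat.succ_mul_centralBinom_succ k
    rw [mul_add_one, integral_cos_pow, ih, sin_pi, sin_zero]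
    field_simp
    push_cast
    linear_combination -2 * (4 : ℝ) ^ k * π * hrec

theorem integral_two_mul_cos_pow_even (k : ℕ) :
    ∫ x in (0 : ℝ)..π, (2 * cos x) ^ (2 * k) = π * k.centralBinom := by
  have hpow (x : ℝ) : (2 * cos x) ^ (2 * k) = 4 ^ k * cos x ^ (2 * k) := by
    rw [mul_pow, pow_mul]
    norm_num
  simp_rw [hpow]
  rw [intervalIntegral.integral_const_mul, integral_cos_pow_even]
  field_simp

theorem integral_two_mul_cos_pow_odd (k : ℕ) :
    ∫ x in (0 : ℝ)..π, (2 * cos x) ^ (2 * k + 1) = 0 := by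
  simp_rw [mul_pow]
  rw [intervalIntegral.integral_const_mul, integral_cos_pow_odd, mul_zero]

theorem integral_two_mul_cos_pow_mul_one_add_cos (n : ℕ) :
    ∫ x in (0 : ℝ)..π, (2 * cos x) ^ n * (1 + cos x) = π * n.choose (n / 2) := by
  have hsplit (x : ℝ) :
      (2 * cos x) ^ n * (1 + cos x) = (2 * cos x) ^ n + (2 * cos x) ^ (n + 1) / 2 := by
    ring
  simp_rw [hsplit]
  rw [intervalIntegral.integral_add (Continuous.intervalIntegrable (by fun_prop) _ _)
    (Continuous.intervalIntegrable (by fun_prop) _ _), intervalIntegral.integral_div]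
  obtain ⟨k, rfl | rfl⟩ := Nat.even_or_odd' n
  · rw [integral_two_mul_cos_pow_even, integral_two_mul_cos_pow_odd,
      Nat.mul_div_cancel_left _ two_pos, Nat.centralBinom_eq_two_mul_choose]
    ring
  · rw [integral_two_mul_cos_pow_odd, show 2 * k + 1 + 1 = 2 * (k + 1) by ring,
      integral_two_mul_cos_pow_even, Nat.centralBinom_succ_eq_two_mul_choose,
      show (2 * k + 1) / 2 = k by omega]
    push_cast
    ring

/-- Spectral formula: `a(n) = (2/π)·∫₀^π (2cos θ)ⁿ·(1+cos θ)/2 dθ`. -/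
theorem stmt17 (n : ℕ) :
    (aSum n : ℝ) =
      (2 / Real.pi) *
        ∫ θ in (0 : ℝ)..Real.pi, (2 * Real.cos θ) ^ n * ((1 + Real.cos θ) / 2) := by
  simp_rw [← mul_div_assoc]
  rw [intervalIntegral.integral_div, integral_two_mul_cos_pow_mul_one_add_cos, aSum_eq_choose]
  field_simp
end

section
/- For every natural number n and every real u with −1 < u < 1, Σ_{m=0}^{n} a(n,m)·u^m = (2/π) · ∫_0^π (2cos θ)^n · sin²θ / (1 − 2u·cos θ + u²) dθ. -/
open Filter Real

set_option maxHeartbeats 1000000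

section Helpers
open intervalIntegral

lemma cosInt (k : ℕ) (hk : k ≠ 0) : ∫ x in (0:ℝ)..π, Real.cos (k*x) = 0 := by
  have hc : (k:ℝ) ≠ 0 := Nat.cast_ne_zero.mpr hk
  have := intervalIntegral.integral_comp_mul_left (fun x => Real.cos x) hc (a:=0) (b:=π)
  simpa using this

lemma sinsin (m : ℕ) : ∫ θ in (0:ℝ)..π, Real.sin θ * Real.sin ((m+1)*θ)
    = if m = 0 then π/2 else 0 := by
  have key : ∀ θ : ℝ, Real.sin θ * Real.sin ((m+1)*θ)
      = (Real.cos (m*θ) - Real.cos ((m+2)*θ))/2 := by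
    intro θ
    have h1 : ((m:ℝ)+2)*θ = (m+1)*θ + θ := by ring
    have h2 : (m:ℝ)*θ = (m+1)*θ - θ := by ring
    rw [h1, h2, Real.cos_add, Real.cos_sub]
    ring
  simp only [key]
  rw [intervalIntegral.integral_div]
  rw [intervalIntegral.integral_sub
    (Continuous.intervalIntegrable (by continuity) _ _)
    (Continuous.intervalIntegrable (by continuity) _ _)]
  have h2 : ∫ θ in (0:ℝ)..π, Real.cos ((m+2)*θ) = 0 := by
    have := cosInt (m+2) (by omega)
    simpa using this
  rw [h2]
  rcases Nat.eq_zero_or_pos m with h | h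
  · subst h; simp
  · have := cosInt m (by omega)
    rw [this]
    simp [Nat.pos_iff_ne_zero.mp h]

lemma intA : ∀ n m : ℕ, (∫ θ in (0:ℝ)..π, (2*Real.cos θ)^n * (Real.sin θ * Real.sin ((m+1)*θ)))
    = π/2 * aa n m := by
  intro n
  induction n with
  | zero =>
    intro m
    simp only [pow_zero, one_mul, sinsin, aa]
    split <;> simp
  | succ n ih =>
    intro m
    have key : ∀ θ : ℝ, (2*Real.cos θ)^(n+1) * (Real.sin θ * Real.sin ((m+1)*θ))
        = (2*Real.cos θ)^n * (Real.sin θ * Real.sin ((m+2)*θ))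
          + (2*Real.cos θ)^n * (Real.sin θ * Real.sin (m*θ)) := by
      intro θ
      have h : Real.sin (((m:ℝ)+2)*θ) + Real.sin ((m:ℝ)*θ)
          = 2 * Real.cos θ * Real.sin (((m:ℝ)+1)*θ) := by
        have h1 : ((m:ℝ)+2)*θ = ((m:ℝ)+1)*θ + θ := by ring
        have h2 : (m:ℝ)*θ = ((m:ℝ)+1)*θ - θ := by ring
        rw [h1, h2, Real.sin_add, Real.sin_sub]
        ring
      calc (2*Real.cos θ)^(n+1) * (Real.sin θ * Real.sin ((m+1)*θ))
          = (2*Real.cos θ)^n * (Real.sin θ * (2 * Real.cos θ * Real.sin (((m:ℝ)+1)*θ))) := by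
            ring
        _ = _ := by rw [← h]; ring
    rw [intervalIntegral.integral_congr (g := fun θ => (2*Real.cos θ)^n * (Real.sin θ * Real.sin ((m+2)*θ))
          + (2*Real.cos θ)^n * (Real.sin θ * Real.sin (m*θ))) (fun θ _ => key θ)]
    rw [intervalIntegral.integral_add (Continuous.intervalIntegrable (by continuity) _ _)
      (Continuous.intervalIntegrable (by continuity) _ _)]
    rcases m with _ | k
    · simp only [Nat.cast_zero, zero_mul, Real.sin_zero, mul_zero, intervalIntegral.integral_zero,
        add_zero]
      have := ih 1
      push_cast at this ⊢
      rw [show ((0:ℝ)+2) = (1:ℝ)+1 by ring, this]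
      simp [aa]
    · have h1 := ih (k+2)
      have h2 := ih k
      push_cast at h1 h2 ⊢
      rw [show ((k:ℝ)+1+2) = (k:ℝ)+2+1 by ring] at *
      rw [h1, show ((k:ℝ)+1) = (k:ℝ)+1 from rfl, h2]
      have : aa (n+1) (k+1) = aa n (k+2) + aa n k := by simp [aa]
      rw [this]
      push_cast
      ring


lemma Bkey (u θ : ℝ) : ∀ N : ℕ,
    Real.sin θ - (1 - 2*u*Real.cos θ + u^2) *
      (∑ m ∈ Finset.range (N+1), u^m * Real.sin ((m+1)*θ))
    = u^(N+1) * (Real.sin ((N+2)*θ) - u * Real.sin ((N+1)*θ)) := by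
  intro N
  induction N with
  | zero =>
    simp only [Finset.sum_range_one, pow_zero, one_mul, Nat.cast_zero]
    have h2 : Real.sin (((0:ℝ)+2)*θ) = 2 * Real.sin θ * Real.cos θ := by
      rw [show ((0:ℝ)+2)*θ = θ + θ by ring, Real.sin_add]; ring
    rw [h2]
    norm_num
    ring
  | succ N ih =>
    rw [Finset.sum_range_succ]
    have h : Real.sin (((N:ℝ)+1+2)*θ) + Real.sin (((N:ℝ)+1)*θ)
        = 2 * Real.cos θ * Real.sin (((N:ℝ)+2)*θ) := by
      have h1 : ((N:ℝ)+1+2)*θ = ((N:ℝ)+2)*θ + θ := by ring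
      have h2 : ((N:ℝ)+1)*θ = ((N:ℝ)+2)*θ - θ := by ring
      rw [h1, h2, Real.sin_add, Real.sin_sub]; ring
    push_cast at ih ⊢
    rw [show ((N:ℝ)+1+1) = (N:ℝ)+2 by ring] at *
    linear_combination ih - u^2*u^N*h

lemma Dpos (u : ℝ) (θ : ℝ) :
    (1 - |u|)^2 ≤ 1 - 2*u*Real.cos θ + u^2 := by
  have h1 := Real.neg_one_le_cos θ
  have h2 := Real.cos_le_one θ
  have : u * Real.cos θ ≤ |u| := by
    calc u * Real.cos θ ≤ |u * Real.cos θ| := le_abs_self _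
      _ = |u| * |Real.cos θ| := abs_mul _ _
      _ ≤ |u| * 1 := by
          apply mul_le_mul_of_nonneg_left _ (abs_nonneg u)
          exact abs_cos_le_one θ
      _ = |u| := mul_one _
  have hsq : |u|^2 = u^2 := sq_abs u
  nlinarith

lemma aa_eq_zero : ∀ n m : ℕ, n < m → aa n m = 0 := by
  intro n
  induction n with
  | zero => intro m h; simp [aa]; omega
  | succ n ih =>
    intro m h
    rcases m with _ | k
    · omega
    · simp only [aa, ih (k+2) (by omega), Nat.add_sub_cancel, zero_add,
        if_neg (Nat.succ_ne_zero k)]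
      exact ih k (by omega)


end Helpers

/-- Spectral integral for the endpoint generating function: for `-1 < u < 1`,
`Σ_{m=0}^n a(n,m)·uᵐ = (2/π)·∫₀^π (2cos θ)ⁿ·sin²θ/(1 − 2u·cos θ + u²) dθ`. -/
theorem stmt18 (n : ℕ) (u : ℝ) (hu1 : -1 < u) (hu2 : u < 1) :
    ∑ m ∈ Finset.range (n+1), (aa n m : ℝ) * u ^ m =
      (2 / Real.pi) *
        ∫ θ in (0 : ℝ)..Real.pi,
          (2 * Real.cos θ) ^ n * (Real.sin θ) ^ 2 / (1 - 2 * u * Real.cos θ + u ^ 2) := by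
  have huabs : |u| < 1 := abs_lt.mpr ⟨hu1, hu2⟩
  set ε : ℝ := (1 - |u|)^2 with hε
  have hεpos : 0 < ε := pow_pos (by linarith) 2
  have hD0 : ∀ θ : ℝ, 1 - 2*u*Real.cos θ + u^2 ≠ 0 := fun θ =>
    ne_of_gt (lt_of_lt_of_le hεpos (Dpos u θ))
  have hDcont : Continuous fun θ : ℝ => 1 - 2*u*Real.cos θ + u^2 := by continuity
  have hfcont : Continuous fun θ : ℝ =>
      (2 * Real.cos θ) ^ n * (Real.sin θ) ^ 2 / (1 - 2 * u * Real.cos θ + u ^ 2) :=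
    Continuous.div (by continuity) hDcont hD0
  set I : ℝ := ∫ θ in (0 : ℝ)..Real.pi,
      (2 * Real.cos θ) ^ n * (Real.sin θ) ^ 2 / (1 - 2 * u * Real.cos θ + u ^ 2) with hI
  set S : ℝ := ∑ m ∈ Finset.range (n+1), (aa n m : ℝ) * u ^ m with hS
  have key : ∀ N : ℕ, n ≤ N → |I - π/2 * S| ≤ (π * (2^n * 2 / ε)) * |u|^(N+1) := by
    intro N hN
    have hgcont : Continuous fun θ : ℝ => ∑ m ∈ Finset.range (N+1),
        u^m * ((2*Real.cos θ)^n * (Real.sin θ * Real.sin ((m+1)*θ))) :=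
      continuous_finset_sum _ (fun m _ => by continuity)
    have hsum : (∫ θ in (0:ℝ)..π, ∑ m ∈ Finset.range (N+1),
        u^m * ((2*Real.cos θ)^n * (Real.sin θ * Real.sin ((m+1)*θ))))
        = π/2 * S := by
      rw [intervalIntegral.integral_finset_sum
        (fun m _ => Continuous.intervalIntegrable (by continuity) _ _)]
      have h1 : ∀ m ∈ Finset.range (N+1),
          (∫ θ in (0:ℝ)..π, u^m * ((2*Real.cos θ)^n * (Real.sin θ * Real.sin ((m+1)*θ))))
          = u^m * (π/2 * aa n m) := by
        intro m _
        rw [intervalIntegral.integral_const_mul, intA]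
      rw [Finset.sum_congr rfl h1]
      have hSN : S = ∑ m ∈ Finset.range (N+1), (aa n m : ℝ) * u ^ m := by
        rw [hS]
        apply Finset.sum_subset (Finset.range_subset_range.mpr (by omega))
        intro m _ hm
        simp only [Finset.mem_range, not_lt] at hm
        rw [aa_eq_zero n m (by omega)]
        simp
      rw [hSN, Finset.mul_sum]
      exact Finset.sum_congr rfl (fun m _ => by ring)
    have hdiff : I - π/2 * S
        = ∫ θ in (0:ℝ)..π,
            (2*Real.cos θ)^n * Real.sin θ *
              (u^(N+1) * (Real.sin ((N+2)*θ) - u * Real.sin ((N+1)*θ)))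
              / (1 - 2*u*Real.cos θ + u^2) := by
      rw [← hsum, hI, ← intervalIntegral.integral_sub
        (hfcont.intervalIntegrable _ _) (hgcont.intervalIntegrable _ _)]
      apply intervalIntegral.integral_congr
      intro θ _
      have hB := Bkey u θ N
      have hD := hD0 θ
      simp only
      have hsum2 : ∑ m ∈ Finset.range (N+1),
          u^m * ((2*Real.cos θ)^n * (Real.sin θ * Real.sin ((m+1)*θ)))
          = ((2*Real.cos θ)^n * Real.sin θ) *
            ∑ m ∈ Finset.range (N+1), u^m * Real.sin ((m+1)*θ) := by
        rw [Finset.mul_sum]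
        exact Finset.sum_congr rfl (fun m _ => by ring)
      rw [hsum2]
      rw [eq_div_iff hD, sub_mul, div_mul_cancel₀ _ hD]
      linear_combination ((2*Real.cos θ)^n * Real.sin θ) * hB
    rw [hdiff]
    have hbound : ∀ θ ∈ Set.uIoc (0:ℝ) π,
        ‖(2*Real.cos θ)^n * Real.sin θ *
          (u^(N+1) * (Real.sin ((N+2)*θ) - u * Real.sin ((N+1)*θ)))
          / (1 - 2*u*Real.cos θ + u^2)‖ ≤ (2^n * 2 / ε) * |u|^(N+1) := by
      intro θ _
      rw [Real.norm_eq_abs, abs_div, abs_mul, abs_mul]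
      have h1 : |(2*Real.cos θ)^n| ≤ 2^n := by
        rw [abs_pow]
        apply pow_le_pow_left₀ (abs_nonneg _)
        rw [abs_mul, abs_two]
        nlinarith [abs_cos_le_one θ, abs_nonneg (Real.cos θ)]
      have h2 : |Real.sin θ| ≤ 1 := abs_sin_le_one θ
      have h3 : |u^(N+1) * (Real.sin ((N+2)*θ) - u * Real.sin ((N+1)*θ))| ≤ |u|^(N+1) * 2 := by
        rw [abs_mul, abs_pow]
        apply mul_le_mul_of_nonneg_left _ (pow_nonneg (abs_nonneg _) _)
        have := abs_sub (Real.sin ((N+2)*θ)) (u * Real.sin ((N+1)*θ))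
        have hu' : |u * Real.sin ((N+1)*θ)| ≤ 1 := by
          rw [abs_mul]
          nlinarith [abs_sin_le_one ((N+1)*θ), abs_nonneg u, abs_nonneg (Real.sin ((N+1)*θ))]
        nlinarith [abs_sin_le_one ((N+2)*θ)]
      have h4 : ε ≤ |1 - 2*u*Real.cos θ + u^2| := by
        rw [abs_of_pos (lt_of_lt_of_le hεpos (Dpos u θ))]
        exact Dpos u θ
      have hDabs : 0 < |1 - 2*u*Real.cos θ + u^2| := lt_of_lt_of_le hεpos h4
      rw [div_le_iff₀ hDabs]
      have step1 : |(2*Real.cos θ)^n| * |Real.sin θ| *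
          |u^(N+1) * (Real.sin ((N+2)*θ) - u * Real.sin ((N+1)*θ))|
          ≤ 2^n * 2 * |u|^(N+1) := by
        have := mul_le_mul (mul_le_mul h1 h2 (abs_nonneg _) (by positivity)) h3
          (abs_nonneg _) (by positivity)
        calc |(2*Real.cos θ)^n| * |Real.sin θ| *
            |u^(N+1) * (Real.sin ((N+2)*θ) - u * Real.sin ((N+1)*θ))|
            ≤ 2^n * 1 * (|u|^(N+1) * 2) := this
          _ = 2^n * 2 * |u|^(N+1) := by ring
      have step2 : 2^n * 2 * |u|^(N+1) = (2^n * 2 / ε) * |u|^(N+1) * ε := by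
        field_simp
      calc |(2*Real.cos θ)^n| * |Real.sin θ| *
          |u^(N+1) * (Real.sin ((N+2)*θ) - u * Real.sin ((N+1)*θ))|
          ≤ 2^n * 2 * |u|^(N+1) := step1
        _ = (2^n * 2 / ε) * |u|^(N+1) * ε := step2
        _ ≤ (2^n * 2 / ε) * |u|^(N+1) * |1 - 2*u*Real.cos θ + u^2| := by
            apply mul_le_mul_of_nonneg_left h4
            positivity
    have hle := intervalIntegral.norm_integral_le_of_norm_le_const
      (C := (2^n * 2 / ε) * |u|^(N+1)) hbound
    rw [Real.norm_eq_abs] at hle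
    calc |∫ θ in (0:ℝ)..π, (2*Real.cos θ)^n * Real.sin θ *
          (u^(N+1) * (Real.sin ((N+2)*θ) - u * Real.sin ((N+1)*θ)))
          / (1 - 2*u*Real.cos θ + u^2)|
        ≤ (2^n * 2 / ε) * |u|^(N+1) * |π - 0| := hle
      _ = (π * (2^n * 2 / ε)) * |u|^(N+1) := by
          rw [sub_zero, abs_of_pos Real.pi_pos]; ring
  have hlim : Tendsto (fun N : ℕ => (π * (2^n * 2 / ε)) * |u|^(N+1)) atTop (nhds 0) := by
    have h0 : Tendsto (fun N : ℕ => |u|^N) atTop (nhds 0) :=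
      tendsto_pow_atTop_nhds_zero_of_lt_one (abs_nonneg u) huabs
    have h1 : Tendsto (fun N : ℕ => |u|^(N+1)) atTop (nhds 0) :=
      h0.comp (tendsto_add_atTop_nat 1)
    simpa using h1.const_mul (π * (2^n * 2 / ε))
  have hc : |I - π/2 * S| ≤ 0 := by
    apply ge_of_tendsto hlim
    filter_upwards [eventually_ge_atTop n] with N hN
    exact key N hN
  have hc0 : I = π/2 * S := by
    have h := le_antisymm hc (abs_nonneg _)
    have : I - π/2 * S = 0 := abs_eq_zero.mp h
    linarith
  rw [hc0]
  field_simp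
end

section
/- Let ℓ ≥ 3, let j be an integer with 1 ≤ j ≤ ℓ−1, and set ω = exp(2πi·j/ℓ) ∈ ℂ; assume ω ≠ −1. Then there exists a constant C > 0 such that for all n ≥ 1, |Σ_{m=0}^{n} a(n,m)·ω^m| ≤ C·n^{−3/2}·2^n. -/
/-
Let `S n = ∑ m, a(n,m) ω^m`. Sorting paths of length `n + 1` by their last step gives
`ω S (n+1) + a(n,0) = (ω² + 1) S n`, hence `|S (n+1)| ≤ q |S n| + a(n,0)` with
`q = |ω + ω⁻¹|`. For `|ω| = 1`, `ω ≠ ±1` we have `q < 2`, while `a(2k,0)` is the `k`-th Catalan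
number, so `a(n,0) = O(2ⁿ n^(-3/2))`. A sequence obeying `x (n+1) ≤ q x n + K u n`, where `u`
eventually grows by a factor `ρ > q` per step, is `O(u)`; and `2ⁿ n^(-3/2)` grows by a factor
tending to `2`.
-/

open Filter Real

open Topology

@[simp] lemma aa_zero_left (m : ℕ) : aa 0 m = if m = 0 then 1 else 0 := rfl
@[simp] lemma aa_succ_zero (n : ℕ) : aa (n + 1) 0 = aa n 1 := rfl
@[simp] lemma aa_succ_succ (n m : ℕ) : aa (n + 1) (m + 1) = aa n (m + 2) + aa n m := rfl

lemma aa_eq_zero_of_lt {n m : ℕ} (h : n < m) : aa n m = 0 := by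
  induction n generalizing m with
  | zero => simp [Nat.pos_iff_ne_zero.mp h]
  | succ n ih =>
    obtain ⟨m, rfl⟩ := Nat.exists_eq_add_one_of_ne_zero (by omega : m ≠ 0)
    simp [ih (show n < m + 2 by omega), ih (show n < m by omega)]

-- Reflection principle: the paths that dip below `0` are counted by the second coefficient.
lemma aa_eq_choose_sub_choose (n m : ℕ) :
    (aa n m : ℤ) = if (n + m) % 2 = 0
      then (n.choose ((n + m) / 2) : ℤ) - n.choose ((n + m) / 2 + 1) else 0 := by
  induction n generalizing m with
  | zero =>
    rcases m with _ | m
    · simp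
    · split_ifs with h
      · simp [Nat.choose_eq_zero_of_lt (show 0 < (m + 1) / 2 by omega)]
      · simp
  | succ n ih =>
    rcases m with _ | m
    · rw [aa_succ_zero, ih]
      by_cases hn : (n + 1) % 2 = 0
      · obtain ⟨t, rfl⟩ : ∃ t, n = 2 * t + 1 := ⟨n / 2, by omega⟩
        rw [if_pos (by omega), if_pos (by omega), show (2 * t + 1 + 1) / 2 = t + 1 by omega,
          Nat.choose_succ_succ' (2 * t + 1) t,
          Nat.choose_succ_succ' (2 * t + 1) (t + 1), Nat.choose_symm_half]
        push_cast
        ring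
      · rw [if_neg (by omega), if_neg (by omega)]
    · rw [aa_succ_succ, Nat.cast_add, ih, ih]
      by_cases hnm : (n + m) % 2 = 0
      · obtain ⟨s, hs⟩ : ∃ s, n + m = 2 * s := ⟨(n + m) / 2, by omega⟩
        rw [if_pos (by omega), if_pos (by omega), if_pos (by omega),
          show (n + (m + 2)) / 2 = s + 1 by omega, show (n + m) / 2 = s by omega,
          show (n + 1 + (m + 1)) / 2 = s + 1 by omega, Nat.choose_succ_succ' n (s + 1),
          Nat.choose_succ_succ' n s]
        push_cast
        ring
      · rw [if_neg (by omega), if_neg (by omega), if_neg (by omega), add_zero]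

lemma aa_two_mul_zero (k : ℕ) : aa (2 * k) 0 = catalan k := by
  have hcl := aa_eq_choose_sub_choose (2 * k) 0
  rw [if_pos (by omega), show (2 * k + 0) / 2 = k by omega] at hcl
  have hsucc : (2 * k).choose (k + 1) * (k + 1) = (2 * k).choose k * k := by
    rw [Nat.choose_succ_right_eq, show 2 * k - k = k by omega]
  have hmul : (((k + 1) * aa (2 * k) 0 : ℕ) : ℤ) = ((k + 1) * catalan k : ℕ) := by
    rw [succ_mul_catalan_eq_centralBinom, Nat.centralBinom_eq_two_mul_choose, Nat.cast_mul, hcl]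
    have hsucc' := congrArg (Nat.cast : ℕ → ℤ) hsucc
    push_cast at hsucc' ⊢
    linear_combination -hsucc'
  exact Nat.eq_of_mul_eq_mul_left k.succ_pos (by exact_mod_cast hmul)

lemma aa_zero_of_odd {n : ℕ} (hn : Odd n) : aa n 0 = 0 := by
  have hcl := aa_eq_choose_sub_choose n 0
  rw [if_neg (by have := Nat.odd_iff.mp hn; omega)] at hcl
  exact_mod_cast hcl

lemma centralBinom_sq_mul_succ_le (k : ℕ) : k.centralBinom ^ 2 * (k + 1) ≤ 16 ^ k := by
  induction k with
  | zero => simp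
  | succ k ih =>
    have hrec := Nat.succ_mul_centralBinom_succ k
    have hcube : (2 * k + 1) ^ 2 * (k + 2) ≤ 4 * (k + 1) ^ 3 := by nlinarith
    refine Nat.le_of_mul_le_mul_left ?_ (show 0 < (k + 1) ^ 2 by positivity)
    calc (k + 1) ^ 2 * ((k + 1).centralBinom ^ 2 * (k + 1 + 1))
        = (2 * (2 * k + 1) * k.centralBinom) ^ 2 * (k + 2) := by rw [← hrec]; ring
      _ = 4 * ((2 * k + 1) ^ 2 * (k + 2)) * k.centralBinom ^ 2 := by ring
      _ ≤ 4 * (4 * (k + 1) ^ 3) * k.centralBinom ^ 2 := by gcongr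
      _ = 16 * (k + 1) ^ 2 * (k.centralBinom ^ 2 * (k + 1)) := by ring
      _ ≤ 16 * (k + 1) ^ 2 * 16 ^ k := by gcongr
      _ = (k + 1) ^ 2 * 16 ^ (k + 1) := by ring

lemma catalan_sq_mul_succ_pow_three_le (k : ℕ) : catalan k ^ 2 * (k + 1) ^ 3 ≤ 16 ^ k :=
  calc catalan k ^ 2 * (k + 1) ^ 3 = ((k + 1) * catalan k) ^ 2 * (k + 1) := by ring
    _ = k.centralBinom ^ 2 * (k + 1) := by rw [succ_mul_catalan_eq_centralBinom]
    _ ≤ 16 ^ k := centralBinom_sq_mul_succ_le k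

lemma aa_zero_sq_mul_succ_pow_three_le (n : ℕ) : aa n 0 ^ 2 * (n + 1) ^ 3 ≤ 8 * 4 ^ n := by
  rcases Nat.even_or_odd' n with ⟨k, rfl | rfl⟩
  · calc aa (2 * k) 0 ^ 2 * (2 * k + 1) ^ 3 ≤ catalan k ^ 2 * (8 * (k + 1) ^ 3) := by
          rw [aa_two_mul_zero]; gcongr
          calc (2 * k + 1) ^ 3 ≤ (2 * (k + 1)) ^ 3 := by gcongr; omega
            _ = 8 * (k + 1) ^ 3 := by ring
      _ = 8 * (catalan k ^ 2 * (k + 1) ^ 3) := by ring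
      _ ≤ 8 * 16 ^ k := by gcongr; exact catalan_sq_mul_succ_pow_three_le k
      _ = 8 * 4 ^ (2 * k) := by rw [pow_mul]; norm_num
  · simp [aa_zero_of_odd (odd_two_mul_add_one k)]

-- Shifted to `n + 1`, since `(0 : ℝ) ^ (-3/2) = 0`.
noncomputable def catalanScale (n : ℕ) : ℝ := 2 ^ n * ((n : ℝ) + 1) ^ (-(3 : ℝ) / 2)

lemma catalanScale_pos (n : ℕ) : 0 < catalanScale n := by unfold catalanScale; positivity

lemma aa_zero_le_catalanScale (n : ℕ) : (aa n 0 : ℝ) ≤ 3 * catalanScale n := by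
  have hpow : (((n : ℝ) + 1) ^ ((3 : ℝ) / 2)) ^ 2 = ((n : ℝ) + 1) ^ 3 := by
    rw [← Real.rpow_mul_natCast (by positivity)]; norm_num
  have hsq : ((aa n 0 : ℝ) * ((n : ℝ) + 1) ^ ((3 : ℝ) / 2)) ^ 2 ≤ (3 * 2 ^ n) ^ 2 :=
    calc ((aa n 0 : ℝ) * ((n : ℝ) + 1) ^ ((3 : ℝ) / 2)) ^ 2
        = (aa n 0 : ℝ) ^ 2 * ((n : ℝ) + 1) ^ 3 := by rw [mul_pow, hpow]
      _ ≤ 8 * 4 ^ n := by exact_mod_cast aa_zero_sq_mul_succ_pow_three_le n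
      _ ≤ (3 * 2 ^ n) ^ 2 := by rw [mul_pow, ← pow_mul, mul_comm n, pow_mul]; norm_num
  have hle := (pow_le_pow_iff_left₀ (by positivity) (by positivity) two_ne_zero).mp hsq
  rw [catalanScale, show -(3 : ℝ) / 2 = -(3 / 2) by ring, Real.rpow_neg (by positivity),
    ← div_eq_mul_inv, mul_div_assoc', le_div_iff₀ (by positivity)]
  exact hle

lemma catalanScale_succ (n : ℕ) :
    catalanScale (n + 1) = 2 * (1 + 1 / ((n : ℝ) + 1)) ^ (-(3 : ℝ) / 2) * catalanScale n := by
  have hsucc : (1 + 1 / ((n : ℝ) + 1)) * ((n : ℝ) + 1) = ((n + 1 : ℕ) : ℝ) + 1 := by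
    field_simp; push_cast; ring
  rw [catalanScale, catalanScale, ← hsucc, Real.mul_rpow (by positivity) (by positivity),
    pow_succ]
  ring

lemma eventually_mul_catalanScale_le {ρ : ℝ} (hρ : ρ < 2) :
    ∀ᶠ n in atTop, ρ * catalanScale n ≤ catalanScale (n + 1) := by
  have hlim :
      Tendsto (fun n : ℕ ↦ 2 * (1 + 1 / ((n : ℝ) + 1)) ^ (-(3 : ℝ) / 2)) atTop (𝓝 2) := by
    simpa using ((tendsto_one_div_add_atTop_nhds_zero_nat.const_add 1).rpow_const
      (Or.inl (by norm_num))).const_mul 2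
  filter_upwards [hlim.eventually (lt_mem_nhds hρ)] with n hn
  rw [catalanScale_succ]
  exact mul_le_mul_of_nonneg_right hn.le (catalanScale_pos n).le

theorem exists_le_mul_of_le_mul_add {x u : ℕ → ℝ} {q ρ K : ℝ} (hu : ∀ n, 0 < u n)
    (hq : 0 ≤ q) (hqρ : q < ρ) (hgrowth : ∀ᶠ n in atTop, ρ * u n ≤ u (n + 1))
    (hx : ∀ n, x (n + 1) ≤ q * x n + K * u n) :
    ∃ C, 0 < C ∧ ∀ n, x n ≤ C * u n := by
  obtain ⟨N, hN⟩ := eventually_atTop.mp hgrowth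
  obtain ⟨B, hB⟩ : ∃ B, ∀ n ≤ N, x n ≤ B * u n := by
    refine ⟨∑ k ∈ Finset.range (N + 1), |x k / u k|, fun n hn ↦ ?_⟩
    rw [← div_le_iff₀ (hu n)]
    exact (le_abs_self _).trans (Finset.single_le_sum (f := fun k ↦ |x k / u k|)
      (fun _ _ ↦ abs_nonneg _) (Finset.mem_range.mpr (by omega)))
  set C := max (max B (K / (ρ - q))) 1
  have hC : 0 < C := lt_of_lt_of_le one_pos (le_max_right _ _)
  have hBC : B ≤ C := (le_max_left _ _).trans (le_max_left _ _)
  have hKC : K ≤ (ρ - q) * C := by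
    rw [← div_le_iff₀' (sub_pos.mpr hqρ)]
    exact (le_max_right _ _).trans (le_max_left _ _)
  refine ⟨C, hC, fun n ↦ ?_⟩
  induction n with
  | zero => exact (hB 0 N.zero_le).trans (by gcongr; exact (hu 0).le)
  | succ n ih =>
    rcases le_or_gt (n + 1) N with hn | hn
    · exact (hB _ hn).trans (by gcongr; exact (hu _).le)
    calc x (n + 1) ≤ q * x n + K * u n := hx n
      _ ≤ q * (C * u n) + (ρ - q) * C * u n := by gcongr; exact (hu n).le
      _ = C * (ρ * u n) := by ring
      _ ≤ C * u (n + 1) := by gcongr; exact hN n (by omega)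

section walkSum

variable {R : Type*} [CommSemiring R]

def walkSum (x : R) (n : ℕ) : R := ∑ m ∈ Finset.range (n + 1), (aa n m : R) * x ^ m

lemma walkSum_eq_sum_range (x : R) {n N : ℕ} (h : n + 1 ≤ N) :
    walkSum x n = ∑ m ∈ Finset.range N, (aa n m : R) * x ^ m := by
  refine Finset.sum_subset (Finset.range_subset_range.mpr h) fun m _ hm => ?_
  rw [aa_eq_zero_of_lt (by simpa using hm), Nat.cast_zero, zero_mul]

lemma mul_walkSum_succ_add (x : R) (n : ℕ) :
    x * walkSum x (n + 1) + aa n 0 = (x ^ 2 + 1) * walkSum x n := by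
  set A := ∑ m ∈ Finset.range (n + 1), (aa n (m + 2) : R) * x ^ (m + 1)
  have hsucc : walkSum x (n + 1) = A + x * walkSum x n + aa n 1 := by
    rw [walkSum, Finset.sum_range_succ', walkSum, Finset.mul_sum]
    simp only [aa_succ_succ, aa_succ_zero, Nat.cast_add, add_mul, Finset.sum_add_distrib,
      pow_zero, mul_one]
    congr 2
    exact Finset.sum_congr rfl fun m _ => by ring
  have hshift : walkSum x n = x * A + x * aa n 1 + aa n 0 := by
    rw [walkSum_eq_sum_range x (show n + 1 ≤ n + 3 by omega), Finset.sum_range_succ',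
      Finset.sum_range_succ', Finset.mul_sum]
    simp only [zero_add, pow_zero, pow_one, mul_one]
    congr 2
    · exact Finset.sum_congr rfl fun m _ => by ring
    · ring
  calc x * walkSum x (n + 1) + aa n 0 = (x * A + x * aa n 1 + aa n 0) + x ^ 2 * walkSum x n := by
        rw [hsucc]; ring
    _ = (x ^ 2 + 1) * walkSum x n := by rw [← hshift]; ring

end walkSum

theorem exists_norm_walkSum_le_mul_catalanScale {ω : ℂ} (hω : ‖ω ^ 2 + 1‖ < 2 * ‖ω‖) :
    ∃ C, 0 < C ∧ ∀ n, ‖walkSum ω n‖ ≤ C * catalanScale n := by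
  have hω0 : 0 < ‖ω‖ := by linarith [norm_nonneg (ω ^ 2 + 1)]
  set q := ‖ω ^ 2 + 1‖ / ‖ω‖
  have hq : q < 2 := by rw [div_lt_iff₀ hω0]; linarith
  refine exists_le_mul_of_le_mul_add (K := 3 / ‖ω‖) catalanScale_pos (by positivity)
    (show q < (q + 2) / 2 by linarith) (eventually_mul_catalanScale_le (by linarith)) fun n ↦ ?_
  rw [div_mul_eq_mul_div, div_mul_eq_mul_div, ← add_div, le_div_iff₀ hω0]
  calc ‖walkSum ω (n + 1)‖ * ‖ω‖ = ‖(ω ^ 2 + 1) * walkSum ω n - aa n 0‖ := by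
        rw [← eq_sub_of_add_eq (mul_walkSum_succ_add ω n), norm_mul, mul_comm]
    _ ≤ ‖ω ^ 2 + 1‖ * ‖walkSum ω n‖ + aa n 0 := by
        rw [← norm_mul, ← Complex.norm_natCast]; exact norm_sub_le _ _
    _ ≤ ‖ω ^ 2 + 1‖ * ‖walkSum ω n‖ + 3 * catalanScale n := by
        gcongr; exact aa_zero_le_catalanScale n

lemma norm_sq_add_one_lt_two {ω : ℂ} (h : ‖ω‖ = 1) (h1 : ω ≠ 1) (h2 : ω ≠ -1) :
    ‖ω ^ 2 + 1‖ < 2 := by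
  have hsq : ω ^ 2 ≠ 1 := sq_ne_one_iff.mpr ⟨h1, h2⟩
  have hnorm : ‖ω ^ 2‖ = ‖(1 : ℂ)‖ := by simp [h]
  calc ‖ω ^ 2 + 1‖ < ‖ω ^ 2‖ + ‖(1 : ℂ)‖ :=
        norm_add_lt_of_not_sameRay fun hray ↦ hsq (hray.eq_of_norm_eq hnorm)
    _ = 2 := by norm_num [h]

lemma exp_two_pi_mul_I_mul_div_eq_pow (j ℓ : ℕ) :
    Complex.exp (2 * π * Complex.I * j / ℓ) = Complex.exp (2 * π * Complex.I / ℓ) ^ j := by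
  rw [← Complex.exp_nat_mul]
  ring_nf

theorem stmt19_general (ℓ : ℕ) (j : ℕ) (hj1 : 1 ≤ j) (hjℓ : j ≤ ℓ - 1)
    (ω : ℂ) (hω : ω = Complex.exp (2 * Real.pi * Complex.I * j / ℓ)) (hω1 : ω ≠ -1) :
    ∃ C : ℝ, 0 < C ∧ ∀ n : ℕ, 1 ≤ n →
      ‖∑ m ∈ Finset.range (n+1), (aa n m : ℂ) * ω ^ m‖
        ≤ C * (n : ℝ) ^ (-(3 : ℝ)/2) * 2 ^ n := by
  have hζ := Complex.isPrimitiveRoot_exp ℓ (by omega)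
  rw [exp_two_pi_mul_I_mul_div_eq_pow] at hω
  have hnorm : ‖ω‖ = 1 := by rw [hω, norm_pow, hζ.norm'_eq_one (by omega), one_pow]
  have hne1 : ω ≠ 1 := hω ▸ hζ.pow_ne_one_of_pos_of_lt (by omega) (by omega)
  obtain ⟨C, hC, hbound⟩ := exists_norm_walkSum_le_mul_catalanScale
    (by rw [hnorm, mul_one]; exact norm_sq_add_one_lt_two hnorm hne1 hω1)
  refine ⟨C, hC, fun n hn ↦ (hbound n).trans ?_⟩
  rw [catalanScale, mul_comm (2 ^ n : ℝ), ← mul_assoc]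
  gcongr C * ?_ * _
  exact Real.rpow_le_rpow_of_nonpos (by positivity) (by linarith) (by norm_num)

/-- Uniform bound at roots of unity other than `±1`: for `ℓ ≥ 3`, `1 ≤ j ≤ ℓ−1`,
`ω = exp(2πij/ℓ) ≠ −1`, there is `C > 0` with
`|Σ_{m=0}^n a(n,m)·ωᵐ| ≤ C·n^{-3/2}·2ⁿ` for all `n ≥ 1`. -/
theorem stmt19 (ℓ : ℕ) (hℓ : 3 ≤ ℓ) (j : ℕ) (hj1 : 1 ≤ j) (hjℓ : j ≤ ℓ - 1)
    (ω : ℂ) (hω : ω = Complex.exp (2 * Real.pi * Complex.I * j / ℓ)) (hω1 : ω ≠ -1) :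
    ∃ C : ℝ, 0 < C ∧ ∀ n : ℕ, 1 ≤ n →
      ‖∑ m ∈ Finset.range (n+1), (aa n m : ℂ) * ω ^ m‖
        ≤ C * (n : ℝ) ^ (-(3 : ℝ)/2) * 2 ^ n :=
  stmt19_general ℓ j hj1 hjℓ ω hω hω1
end
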